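/- Let $(\Omega, \mathfrak{B}, \mathcal{P})$ be a probability space, $H$ a separable Banach space, and $(\varrho, \vc{m}) : \Omega \times \mathbb{R} \to H$ a stationary measurable process. Suppose $\mathcal{E} : H \to [0,\infty)$ is a Borel measurable function that is sequentially lower semicontinuous along the paths, in the sense that almost surely $\mathcal{E}((\varrho,\vc{m})(t)) \leq \liminf_{s \to t} \mathcal{E}((\varrho,\vc{m})(s))$ for all $t \in \mathbb{R}$, with $\mathbb{E}[\mathcal{E}((\varrho,\vc{m})(0))] < \infty$ and $t \mapsto \mathcal{E}((\varrho,\vc{m})(t))$ locally integrable a.s. Then for every fixed $t \in \mathbb{R}$, almost surely $\mathcal{E}((\varrho,\vc{m})(t)) = \lim_{\tau \to 0^+} \frac{1}{\tau}\int_t^{t+\tau} \mathcal{E}((\varrho,\vc{m})(s))\,ds = \lim_{\tau \to 0^+} \frac{1}{\tau}\int_{t-\tau}^t \mathcal{E}((\varrho,\vc{m})(s))\,ds$, provided these one-sided limits exist a.s. -/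

import Mathlib

open Filter Set Topology MeasureTheory Metric

/-!
Lower semicontinuity gives, path by path, `E(X t) ≤ lim_τ τ⁻¹ ∫_{A τ} E(X s) ds` for averaging
sets `A τ` shrinking to `t`. Stationarity makes `𝔼[E(X s)]` independent of `s`, so by Tonelli
every average has expectation `𝔼[E(X t)] < ∞`, and by Fatou the limit has expectation at most
`𝔼[E(X t)]`. The limit minus `E(X t)` is thus nonnegative with nonpositive expectation, hence
vanishes almost surely.
-/

theorem le_of_tendsto_average_of_le_liminf {f : ℝ → ℝ} {A : ℝ → Set ℝ} {t l : ℝ}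
    (hbdd : IsBoundedUnder (· ≥ ·) (𝓝[≠] t) f) (hlsc : f t ≤ liminf f (𝓝[≠] t))
    (hAm : ∀ τ, MeasurableSet (A τ)) (hAv : ∀ τ > 0, volume (A τ) = ENNReal.ofReal τ)
    (hAt : ∀ τ > 0, A τ ⊆ closedBall t τ \ {t}) (hf : ∀ τ > 0, IntegrableOn f (A τ))
    (hl : Tendsto (fun τ => τ⁻¹ * ∫ s in A τ, f s) (𝓝[>] 0) (𝓝 l)) : f t ≤ l := by
  refine le_of_forall_lt_imp_le_of_dense fun c hc => ?_
  obtain ⟨δ, hδ, hcf⟩ : ∃ δ > 0, ∀ ⦃s⦄, dist s t < δ → s ∈ ({t}ᶜ : Set ℝ) → c < f s :=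
    Metric.eventually_nhds_iff.1 <| eventually_nhdsWithin_iff.1 <|
      eventually_lt_of_lt_liminf (hc.trans_le hlsc) hbdd
  refine ge_of_tendsto hl ?_
  filter_upwards [Ioo_mem_nhdsGT hδ] with τ ⟨hτ, hτδ⟩
  have hcA : ∀ s ∈ A τ, c ≤ f s := fun s hs =>
    (hcf ((hAt τ hτ hs).1.trans_lt hτδ) (hAt τ hτ hs).2).le
  have hlow := setIntegral_ge_of_const_le_real (hAm τ) (by simp [hAv τ hτ]) hcA (hf τ hτ)
  rw [measureReal_def, hAv τ hτ, ENNReal.toReal_ofReal hτ.le] at hlow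
  rwa [le_inv_mul_iff₀' hτ]

theorem ae_eq_of_ae_le_of_tendsto_of_lintegral_le {α ι : Type*} [MeasurableSpace α]
    {μ : Measure α} {u : Filter ι} [u.NeBot] [u.IsCountablyGenerated] {f : ι → α → ENNReal}
    {g h : α → ENNReal} (hf : ∀ i, AEMeasurable (f i) μ)
    (hfg : ∀ᶠ i in u, ∫⁻ a, f i a ∂μ ≤ ∫⁻ a, g a ∂μ) (hg : ∫⁻ a, g a ∂μ ≠ ⊤)
    (hlim : ∀ᵐ a ∂μ, Tendsto (fun i => f i a) u (𝓝 (h a))) (hgh : g ≤ᵐ[μ] h) : g =ᵐ[μ] h := by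
  refine ae_eq_of_ae_le_of_lintegral_le hgh hg (aemeasurable_of_tendsto_metrizable_ae u hf hlim) ?_
  calc ∫⁻ a, h a ∂μ = ∫⁻ a, liminf (fun i => f i a) u ∂μ :=
        lintegral_congr_ae (hlim.mono fun a ha => ha.liminf_eq.symm)
    _ ≤ liminf (fun i => ∫⁻ a, f i a ∂μ) u := lintegral_liminf_le' hf
    _ ≤ ∫⁻ a, g a ∂μ := liminf_le_of_frequently_le' hfg.frequently

theorem lintegral_ofReal_average_eq {Ω : Type*} [MeasurableSpace Ω] {P : Measure Ω} [SFinite P]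
    {g : Ω → ℝ → ℝ} (hg : Measurable (Function.uncurry g)) (hg0 : ∀ ω s, 0 ≤ g ω s)
    {C : ENNReal} (hC : ∀ s, ∫⁻ ω, ENNReal.ofReal (g ω s) ∂P = C)
    {A : Set ℝ} {τ : ℝ} (hτ : 0 < τ) (hA : volume A = ENNReal.ofReal τ)
    (hint : ∀ᵐ ω ∂P, IntegrableOn (g ω) A) :
    ∫⁻ ω, ENNReal.ofReal (τ⁻¹ * ∫ s in A, g ω s) ∂P = C := by
  calc ∫⁻ ω, ENNReal.ofReal (τ⁻¹ * ∫ s in A, g ω s) ∂P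
      = ∫⁻ ω, ENNReal.ofReal τ⁻¹ * ∫⁻ s in A, ENNReal.ofReal (g ω s) ∂volume ∂P := by
        refine lintegral_congr_ae (hint.mono fun ω hω => ?_)
        simp only [ENNReal.ofReal_mul (inv_nonneg.2 hτ.le),
          ofReal_integral_eq_lintegral_ofReal hω (ae_of_all _ (hg0 ω))]
    _ = ENNReal.ofReal τ⁻¹ * ∫⁻ s in A, ∫⁻ ω, ENNReal.ofReal (g ω s) ∂P := by
        rw [lintegral_const_mul' _ _ ENNReal.ofReal_ne_top,
          lintegral_lintegral_swap hg.ennreal_ofReal.aemeasurable]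
    _ = C := by
        simp_rw [hC, setLIntegral_const, hA, ENNReal.ofReal_inv_of_pos hτ, mul_comm C, ← mul_assoc,
          ENNReal.inv_mul_cancel (ENNReal.ofReal_pos.2 hτ).ne' ENNReal.ofReal_ne_top, one_mul]

theorem ae_tendsto_average_of_lintegral_const {Ω : Type*} [MeasurableSpace Ω] {P : Measure Ω}
    [SFinite P] {g : Ω → ℝ → ℝ} (hg : Measurable (Function.uncurry g)) (hg0 : ∀ ω s, 0 ≤ g ω s)
    {t : ℝ} (hC : ∀ s, ∫⁻ ω, ENNReal.ofReal (g ω s) ∂P = ∫⁻ ω, ENNReal.ofReal (g ω t) ∂P)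
    (hfin : ∫⁻ ω, ENNReal.ofReal (g ω t) ∂P ≠ ⊤) (hloc : ∀ᵐ ω ∂P, LocallyIntegrable (g ω))
    (hlsc : ∀ᵐ ω ∂P, g ω t ≤ liminf (g ω) (𝓝[≠] t))
    (A : ℝ → Set ℝ) (hAm : ∀ τ, MeasurableSet (A τ))
    (hAv : ∀ τ > 0, volume (A τ) = ENNReal.ofReal τ) (hAt : ∀ τ > 0, A τ ⊆ closedBall t τ \ {t})
    (hlim : ∀ᵐ ω ∂P, ∃ l, Tendsto (fun τ => τ⁻¹ * ∫ s in A τ, g ω s) (𝓝[>] 0) (𝓝 l)) :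
    ∀ᵐ ω ∂P, Tendsto (fun τ => τ⁻¹ * ∫ s in A τ, g ω s) (𝓝[>] 0) (𝓝 (g ω t)) := by
  set avg : ℝ → Ω → ℝ := fun τ ω => τ⁻¹ * ∫ s in A τ, g ω s
  set l : Ω → ℝ := fun ω => limUnder (𝓝[>] 0) (avg · ω)
  have hl : ∀ᵐ ω ∂P, Tendsto (avg · ω) (𝓝[>] 0) (𝓝 (l ω)) :=
    hlim.mono fun ω => tendsto_nhds_limUnder
  have hint : ∀ᵐ ω ∂P, ∀ τ > 0, IntegrableOn (g ω) (A τ) := hloc.mono fun ω hω τ hτ =>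
    (hω.integrableOn_isCompact (isCompact_closedBall t τ)).mono_set fun s hs => (hAt τ hτ hs).1
  have hle : ∀ᵐ ω ∂P, g ω t ≤ l ω := by
    filter_upwards [hlsc, hint, hl] with ω hlscω hintω hlω
    exact le_of_tendsto_average_of_le_liminf (isBoundedUnder_of ⟨0, hg0 ω⟩) hlscω hAm hAv hAt
      hintω hlω
  have hexp : ∀ᶠ τ in 𝓝[>] 0, ∫⁻ ω, ENNReal.ofReal (avg τ ω) ∂P
      = ∫⁻ ω, ENNReal.ofReal (g ω t) ∂P := by
    filter_upwards [self_mem_nhdsWithin] with τ hτ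
    exact lintegral_ofReal_average_eq hg hg0 hC hτ (hAv τ hτ) (hint.mono fun ω hω => hω τ hτ)
  have hmeas : ∀ τ, AEMeasurable (fun ω => ENNReal.ofReal (avg τ ω)) P := fun τ =>
    ((hg.stronglyMeasurable.integral_prod_right' (ν := volume.restrict (A τ))).measurable
      |>.const_mul τ⁻¹ |>.ennreal_ofReal).aemeasurable
  have heq : (fun ω => ENNReal.ofReal (g ω t)) =ᵐ[P] fun ω => ENNReal.ofReal (l ω) :=
    ae_eq_of_ae_le_of_tendsto_of_lintegral_le hmeas (hexp.mono fun _ h => h.le) hfin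
      (hl.mono fun ω h => (ENNReal.continuous_ofReal.tendsto _).comp h)
      (hle.mono fun ω h => ENNReal.ofReal_le_ofReal h)
  filter_upwards [hl, hle, heq] with ω hlω hleω heqω
  rwa [(ENNReal.ofReal_eq_ofReal_iff (hg0 ω t) ((hg0 ω t).trans hleω)).1 heqω]

theorem map_eval_eq_of_stationary {Ω H : Type*} [MeasurableSpace Ω] [MeasurableSpace H]
    {P : Measure Ω} {X : Ω → ℝ → H} (hX : ∀ r, Measurable fun ω => X ω r)
    (hstat : ∀ (τ : ℝ) (n : ℕ) (t : Fin n → ℝ),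
      Measure.map (fun ω => fun i => X ω (t i + τ)) P =
        Measure.map (fun ω => fun i => X ω (t i)) P) (r s : ℝ) :
    P.map (fun ω => X ω r) = P.map (fun ω => X ω s) := by
  have h := congrArg (Measure.map fun x : Fin 1 → H => x 0) (hstat (r - s) 1 fun _ => s)
  rw [Measure.map_map (measurable_pi_apply 0) (measurable_pi_lambda _ fun _ => hX _),
    Measure.map_map (measurable_pi_apply 0) (measurable_pi_lambda _ fun _ => hX _)] at h
  simpa [Function.comp_def] using h

theorem locallyIntegrable_of_forall_integrableOn_Icc {E : Type*} [NormedAddCommGroup E]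
    {f : ℝ → E} (h : ∀ M > (0 : ℝ), IntegrableOn f (Icc (-M) M)) : LocallyIntegrable f := by
  refine locallyIntegrable_iff.2 fun K hK => ?_
  obtain ⟨r, hr⟩ := (isBounded_iff_subset_closedBall 0).1 hK.isBounded
  refine (h (max r 1) (by positivity)).mono_set (hr.trans ?_)
  rw [Real.closedBall_eq_Icc, zero_sub, zero_add]
  exact Icc_subset_Icc (neg_le_neg (le_max_left _ _)) (le_max_left _ _)

theorem Ioc_add_subset_closedBall_diff {τ : ℝ} (hτ : 0 ≤ τ) (t : ℝ) :
    Ioc t (t + τ) ⊆ closedBall t τ \ {t} :=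
  fun _ hs => ⟨Real.closedBall_eq_Icc ▸ ⟨by linarith [hs.1], hs.2⟩, hs.1.ne'⟩

theorem Ico_sub_subset_closedBall_diff {τ : ℝ} (hτ : 0 ≤ τ) (t : ℝ) :
    Ico (t - τ) t ⊆ closedBall t τ \ {t} :=
  fun _ hs => ⟨Real.closedBall_eq_Icc ▸ ⟨hs.1, by linarith [hs.2]⟩, hs.2.ne⟩

theorem stmt19_general {Ω : Type*} [MeasurableSpace Ω] (P : Measure Ω) [IsProbabilityMeasure P]
    {H : Type*} [MeasurableSpace H]
    (X : Ω → ℝ → H)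
    (hmeas : Measurable (Function.uncurry X))
    (hstat : ∀ (τ : ℝ) (n : ℕ) (t : Fin n → ℝ),
      Measure.map (fun ω => fun i => X ω (t i + τ)) P =
        Measure.map (fun ω => fun i => X ω (t i)) P)
    (E : H → ℝ) (hE0 : ∀ h, 0 ≤ E h) (hEmeas : Measurable E)
    (hlsc : ∀ᵐ ω ∂P, ∀ t : ℝ,
      E (X ω t) ≤ Filter.liminf (fun s => E (X ω s)) (𝓝[≠] t))
    (hint : Integrable (fun ω => E (X ω 0)) P)
    (hloc : ∀ᵐ ω ∂P, ∀ M > (0 : ℝ), IntegrableOn (fun s => E (X ω s)) (Icc (-M) M))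
    (t : ℝ)
    (hlim : ∀ᵐ ω ∂P,
      (∃ l : ℝ, Tendsto (fun τ : ℝ => τ⁻¹ * ∫ s in Ioc t (t + τ), E (X ω s))
        (𝓝[>] 0) (𝓝 l)) ∧
      (∃ l : ℝ, Tendsto (fun τ : ℝ => τ⁻¹ * ∫ s in Ico (t - τ) t, E (X ω s))
        (𝓝[>] 0) (𝓝 l))) :
    ∀ᵐ ω ∂P,
      Tendsto (fun τ : ℝ => τ⁻¹ * ∫ s in Ioc t (t + τ), E (X ω s))
        (𝓝[>] 0) (𝓝 (E (X ω t))) ∧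
      Tendsto (fun τ : ℝ => τ⁻¹ * ∫ s in Ico (t - τ) t, E (X ω s))
        (𝓝[>] 0) (𝓝 (E (X ω t))) := by
  have hX : ∀ r, Measurable fun ω => X ω r := fun r => hmeas.comp measurable_prodMk_right
  have hC : ∀ s, ∫⁻ ω, ENNReal.ofReal (E (X ω s)) ∂P = ∫⁻ ω, ENNReal.ofReal (E (X ω t)) ∂P :=
    fun s => by
      rw [← lintegral_map hEmeas.ennreal_ofReal (hX s),
        ← lintegral_map hEmeas.ennreal_ofReal (hX t), map_eval_eq_of_stationary hX hstat s t]
  have hfin : ∫⁻ ω, ENNReal.ofReal (E (X ω t)) ∂P ≠ ⊤ := hC 0 ▸ hint.lintegral_lt_top.ne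
  have haverage := ae_tendsto_average_of_lintegral_const (g := fun ω s => E (X ω s))
    (hEmeas.comp hmeas) (fun _ _ => hE0 _) hC hfin
    (hloc.mono fun _ => locallyIntegrable_of_forall_integrableOn_Icc) (hlsc.mono fun _ h => h t)
  have hright := haverage (fun τ => Ioc t (t + τ)) (fun _ => measurableSet_Ioc) (fun _ _ => by simp)
    (fun _ hτ => Ioc_add_subset_closedBall_diff hτ.le t) (hlim.mono fun _ h => h.1)
  have hleft := haverage (fun τ => Ico (t - τ) t) (fun _ => measurableSet_Ico) (fun _ _ => by simp)
    (fun _ hτ => Ico_sub_subset_closedBall_diff hτ.le t) (hlim.mono fun _ h => h.2)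
  filter_upwards [hright, hleft] with ω h1 h2 using ⟨h1, h2⟩

/-- Strong continuity of the energy of stationary processes: if `(ϱ,m)` is a stationary
measurable process in a separable Banach space `H` and `E : H → [0,∞)` is Borel,
pathwise sequentially lower semicontinuous, with `𝔼[E(X(0))] < ∞` and locally integrable
paths, then for each fixed `t`, a.s. the energy at `t` equals both one-sided Lebesgue
averages (provided these one-sided limits exist a.s.). -/
theorem stmt19 {Ω : Type*} [MeasurableSpace Ω] (P : Measure Ω) [IsProbabilityMeasure P]
    {H : Type*} [NormedAddCommGroup H] [NormedSpace ℝ H]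
    [TopologicalSpace.SeparableSpace H] [MeasurableSpace H] [BorelSpace H]
    (X : Ω → ℝ → H)
    (hmeas : Measurable (Function.uncurry X))
    (hstat : ∀ (τ : ℝ) (n : ℕ) (t : Fin n → ℝ),
      Measure.map (fun ω => fun i => X ω (t i + τ)) P =
        Measure.map (fun ω => fun i => X ω (t i)) P)
    (E : H → ℝ) (hE0 : ∀ h, 0 ≤ E h) (hEmeas : Measurable E)
    (hlsc : ∀ᵐ ω ∂P, ∀ t : ℝ,
      E (X ω t) ≤ Filter.liminf (fun s => E (X ω s)) (𝓝[≠] t))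
    (hint : Integrable (fun ω => E (X ω 0)) P)
    (hloc : ∀ᵐ ω ∂P, ∀ M > (0 : ℝ), IntegrableOn (fun s => E (X ω s)) (Icc (-M) M))
    (t : ℝ)
    (hlim : ∀ᵐ ω ∂P,
      (∃ l : ℝ, Tendsto (fun τ : ℝ => τ⁻¹ * ∫ s in Ioc t (t + τ), E (X ω s))
        (𝓝[>] 0) (𝓝 l)) ∧
      (∃ l : ℝ, Tendsto (fun τ : ℝ => τ⁻¹ * ∫ s in Ico (t - τ) t, E (X ω s))
        (𝓝[>] 0) (𝓝 l))) :
    ∀ᵐ ω ∂P,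
      Tendsto (fun τ : ℝ => τ⁻¹ * ∫ s in Ioc t (t + τ), E (X ω s))
        (𝓝[>] 0) (𝓝 (E (X ω t))) ∧
      Tendsto (fun τ : ℝ => τ⁻¹ * ∫ s in Ico (t - τ) t, E (X ω s))
        (𝓝[>] 0) (𝓝 (E (X ω t))) :=
  stmt19_general P X hmeas hstat E hE0 hEmeas hlsc hint hloc t hlim
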